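/- The set Q_{20,45,40} of positive definite integral binary quadratic forms [45a, b, c] of discriminant b² − 180ac = −20 with b ≡ 40 (mod 90) decomposes into exactly two orbits under the action of Γ_0(45), represented by the forms [405, 40, 1] and [90, −50, 7]. -/

import Mathlib

/-- A binary quadratic form `(a, b, c)`, representing `a x² + b x y + c y²`. -/
abbrev QF := ℤ × ℤ × ℤ

/-- The discriminant `b² - 4 a c` of a binary quadratic form. -/
def disc (Q : QF) : ℤ := Q.2.1 ^ 2 - 4 * Q.1 * Q.2.2

/-- The (right) action of an integer matrix `g = (p q; r s)` on a form:
`(Q ∘ g)(x, y) = Q (p x + q y, r x + s y)`. -/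
def act (Q : QF) (g : Matrix (Fin 2) (Fin 2) ℤ) : QF :=
  (Q.1 * g 0 0 ^ 2 + Q.2.1 * g 0 0 * g 1 0 + Q.2.2 * g 1 0 ^ 2,
   2 * Q.1 * g 0 0 * g 0 1 + Q.2.1 * (g 0 0 * g 1 1 + g 0 1 * g 1 0) + 2 * Q.2.2 * g 1 0 * g 1 1,
   Q.1 * g 0 1 ^ 2 + Q.2.1 * g 0 1 * g 1 1 + Q.2.2 * g 1 1 ^ 2)

/-- Integer matrices of determinant `1` with lower-left entry divisible by `N`. -/
def Gamma0 (N : ℕ) : Set (Matrix (Fin 2) (Fin 2) ℤ) :=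
  {g | g.det = 1 ∧ (N : ℤ) ∣ g 1 0}

/-- `Q_{D,N,β}`: positive definite forms `[N a, b, c]` of discriminant `-D` with
middle coefficient `≡ β (mod 2N)`. -/
def QDNbeta (N : ℕ) (D β : ℤ) : Set QF :=
  {Q | 0 < Q.1 ∧ (N : ℤ) ∣ Q.1 ∧ disc Q = -D ∧ (2 * N : ℤ) ∣ Q.2.1 - β}

/-- `Γ₀(N)`-equivalence of forms. -/
def req (N : ℕ) (Q Q' : QF) : Prop := ∃ g ∈ Gamma0 N, act Q g = Q'

/-!
Write a form as `Q = [45a, b, c]`. Then `Q(x, 45y) = 45 F(x, y)` for `F = [a, b, 45c]`, a form of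
discriminant `-20`. Lagrange reduction brings `F` under `SL₂(ℤ)` to `[1, 0, 5]` or `[2, ±2, 3]`,
whose values at `(1, 0), (0, 1), (1, 1), (1, -1)` are at most `7`; the image `(x, y)` of one of
these vectors has `gcd(x, 45) = 1`, so `(x, 45y)` is the first column of a matrix of `Γ₀(45)`, and
it moves `Q` to a form with first coefficient at most `315`. The few such forms with
`-45a ≤ b < 45a` are matched to the two representatives by explicit matrices. The orbits differ
because `405q² + 40qs + s² = (s + 20q)² + 5q²` never equals `7`, as `2` is not a square mod `5`.
-/

namespace QF

def eval (Q : QF) (x y : ℤ) : ℤ := Q.1 * x ^ 2 + Q.2.1 * x * y + Q.2.2 * y ^ 2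

def IsReduced (Q : QF) : Prop := |Q.2.1| ≤ Q.1 ∧ Q.1 ≤ Q.2.2

theorem eval_act (Q : QF) (g : Matrix (Fin 2) (Fin 2) ℤ) (x y : ℤ) :
    (act Q g).eval x y = Q.eval (g 0 0 * x + g 0 1 * y) (g 1 0 * x + g 1 1 * y) := by
  simp only [eval, act]; ring

theorem act_fst (Q : QF) (g : Matrix (Fin 2) (Fin 2) ℤ) :
    (act Q g).1 = Q.eval (g 0 0) (g 1 0) := rfl

theorem act_snd_snd (Q : QF) (g : Matrix (Fin 2) (Fin 2) ℤ) :
    (act Q g).2.2 = Q.eval (g 0 1) (g 1 1) := rfl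

theorem act_mul (Q : QF) (g h : Matrix (Fin 2) (Fin 2) ℤ) :
    act (act Q g) h = act Q (g * h) := by
  simp only [act, Matrix.mul_apply, Fin.sum_univ_two, Prod.mk.injEq]
  refine ⟨by ring, by ring, by ring⟩

theorem act_translate (Q : QF) (n : ℤ) :
    act Q !![1, n; 0, 1] = (Q.1, Q.2.1 + 2 * Q.1 * n, Q.eval n 1) := by
  simp only [act, eval, Matrix.of_apply, Matrix.cons_val', Matrix.cons_val_zero,
    Matrix.cons_val_one, Matrix.empty_val', Matrix.cons_val_fin_one, Prod.mk.injEq]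
  exact ⟨by ring, by ring, trivial⟩

theorem act_swap (Q : QF) : act Q !![0, -1; 1, 0] = (Q.2.2, -Q.2.1, Q.1) := by
  simp only [act, Matrix.of_apply, Matrix.cons_val', Matrix.cons_val_zero,
    Matrix.cons_val_one, Matrix.empty_val', Matrix.cons_val_fin_one, Prod.mk.injEq]
  refine ⟨by ring, by ring, by ring⟩

theorem disc_act (Q : QF) {g : Matrix (Fin 2) (Fin 2) ℤ} (hg : g.det = 1) :
    disc (act Q g) = disc Q := by
  rw [Matrix.det_fin_two] at hg
  simp only [disc, act]
  linear_combination (g 0 0 * g 1 1 - g 0 1 * g 1 0 + 1) * (Q.2.1 ^ 2 - 4 * Q.1 * Q.2.2) * hg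

theorem four_mul_fst_mul_eval (Q : QF) (x y : ℤ) :
    4 * Q.1 * Q.eval x y = (2 * Q.1 * x + Q.2.1 * y) ^ 2 - disc Q * y ^ 2 := by
  simp only [eval, disc]; ring

theorem eval_pos {Q : QF} (hQ : 0 < Q.1) (hd : disc Q < 0) {x y : ℤ}
    (hxy : (x, y) ≠ 0) : 0 < Q.eval x y := by
  have key := Q.four_mul_fst_mul_eval x y
  rcases eq_or_ne y 0 with rfl | hy
  · have hx : x ≠ 0 := by simpa using hxy
    simpa [eval] using mul_pos hQ (pow_pos (abs_pos.2 hx) 2 |>.trans_eq (sq_abs x))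
  · have : 0 < (2 * Q.1 * x + Q.2.1 * y) ^ 2 - disc Q * y ^ 2 := by
      nlinarith [sq_nonneg (2 * Q.1 * x + Q.2.1 * y), pow_pos (abs_pos.2 hy) 2, sq_abs y]
    nlinarith

end QF

open QF

theorem mk_mem_Gamma0 {N : ℕ} {p q r s : ℤ} (hdet : p * s - q * r = 1) (hr : (N : ℤ) ∣ r) :
    !![p, q; r, s] ∈ Gamma0 N :=
  ⟨by rw [Matrix.det_fin_two_of, hdet], by simpa using hr⟩

theorem Gamma0_mul {N : ℕ} {g h : Matrix (Fin 2) (Fin 2) ℤ} (hg : g ∈ Gamma0 N)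
    (hh : h ∈ Gamma0 N) : g * h ∈ Gamma0 N := by
  refine ⟨by rw [Matrix.det_mul, hg.1, hh.1, one_mul], ?_⟩
  rw [Matrix.mul_apply, Fin.sum_univ_two]
  exact dvd_add (hg.2.mul_right _) (hh.2.mul_left _)

theorem req_trans {N : ℕ} {Q Q' Q'' : QF} (h : req N Q Q') (h' : req N Q' Q'') :
    req N Q Q'' := by
  obtain ⟨g, hg, rfl⟩ := h
  obtain ⟨g', hg', rfl⟩ := h'
  exact ⟨g * g', Gamma0_mul hg hg', (act_mul Q g g').symm⟩

theorem act_mem_QDNbeta {N : ℕ} {D β : ℤ} (hD : 0 < D) {Q : QF} (hQ : Q ∈ QDNbeta N D β)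
    {g : Matrix (Fin 2) (Fin 2) ℤ} (hg : g ∈ Gamma0 N) : act Q g ∈ QDNbeta N D β := by
  obtain ⟨hpos, ⟨a, ha⟩, hdisc, ⟨k, hk⟩⟩ := hQ
  obtain ⟨hdet, ⟨r, hr⟩⟩ := hg
  have hdet' := hdet
  rw [Matrix.det_fin_two, hr] at hdet'
  refine ⟨?_, ?_, by rw [disc_act Q hdet, hdisc], ?_⟩
  · refine eval_pos hpos (by omega) fun h0 => ?_
    simp only [Prod.mk_eq_zero] at h0
    simp [Matrix.det_fin_two, h0] at hdet
  · exact ⟨a * g 0 0 ^ 2 + Q.2.1 * g 0 0 * r + Q.2.2 * N * r ^ 2, by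
      simp only [act, ha, hr]; ring⟩
  · -- `b' - b = 2 (A p q + b q r + c r s)` as `p s - q r = 1`, and `N` divides `A` and `r`
    refine ⟨a * g 0 0 * g 0 1 + Q.2.1 * g 0 1 * r + Q.2.2 * r * g 1 1 + k, ?_⟩
    simp only [act, ha, hr]
    linear_combination Q.2.1 * hdet' + hk

theorem exists_mem_Gamma0_fst_col {N : ℕ} {x y : ℤ} (h : IsCoprime x (N * y)) :
    ∃ g ∈ Gamma0 N, g 0 0 = x ∧ g 1 0 = N * y := by
  obtain ⟨u, v, huv⟩ := h
  exact ⟨!![x, -v; N * y, u], mk_mem_Gamma0 (by linear_combination huv) (dvd_mul_right _ _),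
    rfl, rfl⟩

theorem exists_act_translate_snd_mem_Ico (Q : QF) (hQ : 0 < Q.1) :
    ∃ n : ℤ, (act Q !![1, n; 0, 1]).2.1 ∈ Set.Ico (-Q.1) Q.1 := by
  refine ⟨-((Q.2.1 + Q.1) / (2 * Q.1)), ?_⟩
  have h0 := Int.emod_nonneg (Q.2.1 + Q.1) (by omega : 2 * Q.1 ≠ 0)
  have h1 := Int.emod_lt_of_pos (Q.2.1 + Q.1) (by omega : 0 < 2 * Q.1)
  have h2 := Int.mul_ediv_add_emod (Q.2.1 + Q.1) (2 * Q.1)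
  rw [act_translate]
  constructor <;> linarith

theorem exists_isReduced_act (Q : QF) (hQ : 0 < Q.1) (hd : disc Q < 0) :
    ∃ h : Matrix (Fin 2) (Fin 2) ℤ, h.det = 1 ∧ (act Q h).IsReduced := by
  induction hn : Q.1.toNat using Nat.strong_induction_on generalizing Q with
  | _ n ih =>
  obtain ⟨m, hm⟩ := exists_act_translate_snd_mem_Ico Q hQ
  set T : Matrix (Fin 2) (Fin 2) ℤ := !![1, m; 0, 1]
  have hT : T.det = 1 := by simp [T, Matrix.det_fin_two_of]
  have hT1 : (act Q T).1 = Q.1 := by rw [act_translate]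
  have hdT : disc (act Q T) < 0 := by rwa [disc_act Q hT]
  by_cases hle : (act Q T).1 ≤ (act Q T).2.2
  · exact ⟨T, hT, abs_le.2 ⟨by linarith [hm.1], by linarith [hm.2]⟩, hle⟩
  · set S : Matrix (Fin 2) (Fin 2) ℤ := !![0, -1; 1, 0]
    have hS : S.det = 1 := by simp [S, Matrix.det_fin_two_of]
    have hc : 0 < (act Q T).2.2 := by
      simp only [disc] at hdT
      nlinarith [sq_nonneg (act Q T).2.1]
    obtain ⟨h, hh, hred⟩ := ih (act Q T).2.2.toNat (by omega) (act (act Q T) S)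
      (by rwa [act_swap]) (by rwa [disc_act _ hS]) (by rw [act_swap])
    refine ⟨T * (S * h), by rw [Matrix.det_mul, Matrix.det_mul, hT, hS, hh]; norm_num, ?_⟩
    rwa [← act_mul, ← act_mul]

theorem QF.IsReduced.eq_of_disc_eq_neg_twenty {R : QF} (hR : R.IsReduced) (hd : disc R = -20) :
    R = (1, 0, 5) ∨ R = (2, 2, 3) ∨ R = (2, -2, 3) := by
  obtain ⟨a, b, c⟩ := R
  obtain ⟨hb, hac⟩ := hR
  obtain ⟨hb₁, hb₂⟩ := abs_le.1 hb
  clear hb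
  simp only [disc] at hd hb₁ hb₂ hac
  simp only [Prod.mk.injEq]
  have ha : a ≤ 2 := by nlinarith
  have ha' : 0 < a := by nlinarith
  interval_cases a <;> interval_cases b <;> omega

def smallVectors : Finset (ℤ × ℤ) := {(1, 0), (0, 1), (1, 1), (1, -1)}

theorem isCoprime_of_mem_smallVectors {v : ℤ × ℤ} (hv : v ∈ smallVectors) :
    IsCoprime v.1 v.2 := by
  simp only [smallVectors, Finset.mem_insert, Finset.mem_singleton] at hv
  rcases hv with rfl | rfl | rfl | rfl
  exacts [isCoprime_one_left, isCoprime_one_right, isCoprime_one_left, isCoprime_one_left]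

theorem QF.IsReduced.eval_le_seven {R : QF} (hR : R.IsReduced) (hd : disc R = -20)
    {v : ℤ × ℤ} (hv : v ∈ smallVectors) : R.eval v.1 v.2 ≤ 7 := by
  rcases hR.eq_of_disc_eq_neg_twenty hd with rfl | rfl | rfl <;> revert v <;> decide

-- `(1,0), (0,1), (1,1), (1,-1)` are four distinct points of `ℙ¹(𝔽₃)` and of `ℙ¹(𝔽₅)`, so at most
-- one of the four values is divisible by `3` and at most one by `5`.
theorem exists_mem_smallVectors_isCoprime_forty_five {a b : ℤ} (hab : IsCoprime a b) :
    ∃ v ∈ smallVectors, IsCoprime (a * v.1 + b * v.2) 45 := by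
  have not_dvd_both (p : ℤ) (hp : 1 < p) : ¬ (p ∣ a ∧ p ∣ b) := fun ⟨ha, hb⟩ => by
    have := Int.isUnit_iff.1 (hab.isUnit_of_dvd' ha hb)
    omega
  have h3 := not_dvd_both 3 (by norm_num)
  have h5 := not_dvd_both 5 (by norm_num)
  obtain ⟨v, hv, hv3, hv5⟩ :
      ∃ v ∈ smallVectors, ¬ 3 ∣ a * v.1 + b * v.2 ∧ ¬ 5 ∣ a * v.1 + b * v.2 := by
    by_contra! H
    have H1 := H (1, 0) (by decide)
    have H2 := H (0, 1) (by decide)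
    have H3 := H (1, 1) (by decide)
    have H4 := H (1, -1) (by decide)
    simp only [mul_one, mul_zero, add_zero, zero_add, mul_neg] at H1 H2 H3 H4
    omega
  refine ⟨v, hv, ?_⟩
  have c3 := (Int.prime_three.coprime_iff_not_dvd.2 hv3).symm
  have c5 := ((Int.prime_iff_natAbs_prime.2 (by norm_num)).coprime_iff_not_dvd.2 hv5).symm
  simpa using (c3.pow_right (n := 2)).mul_right c5

theorem isCoprime_mulVec {h : Matrix (Fin 2) (Fin 2) ℤ} (hh : h.det = 1) {m n : ℤ}
    (hmn : IsCoprime m n) : IsCoprime (h 0 0 * m + h 0 1 * n) (h 1 0 * m + h 1 1 * n) := by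
  obtain ⟨u, w, huw⟩ := hmn
  rw [Matrix.det_fin_two] at hh
  exact ⟨u * h 1 1 - w * h 1 0, w * h 0 0 - u * h 0 1,
    by linear_combination (u * m + w * n) * hh + huw⟩

theorem exists_Gamma0_act_fst_le {Q : QF} (hQ : Q ∈ QDNbeta 45 20 40) :
    ∃ g ∈ Gamma0 45, (act Q g).1 ≤ 315 := by
  obtain ⟨hpos, ⟨a, ha⟩, hd, -⟩ := hQ
  set F : QF := (a, Q.2.1, 45 * Q.2.2)
  have hF (x y : ℤ) : Q.eval x (45 * y) = 45 * F.eval x y := by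
    simp only [QF.eval, F, ha]; push_cast; ring
  have hdF : disc F = -20 := by
    simp only [disc, F] at hd ⊢
    rw [ha] at hd
    linear_combination hd
  obtain ⟨h, hh, hred⟩ := exists_isReduced_act F (by simp only [F]; omega) (by omega)
  have hrow : IsCoprime (h 0 0) (h 0 1) := by
    rw [Matrix.det_fin_two] at hh
    exact ⟨h 1 1, -h 1 0, by linear_combination hh⟩
  obtain ⟨v, hv, hx⟩ := exists_mem_smallVectors_isCoprime_forty_five hrow
  have hxy := isCoprime_mulVec hh (isCoprime_of_mem_smallVectors hv)
  obtain ⟨g, hg, hg0, hg1⟩ := exists_mem_Gamma0_fst_col (N := 45) (hx.mul_right hxy)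
  refine ⟨g, hg, ?_⟩
  have hval := hred.eval_le_seven (by rwa [disc_act F hh]) hv
  rw [QF.eval_act] at hval
  rw [QF.act_fst, hg0, hg1, Nat.cast_ofNat, hF]
  omega

def smallForms : Finset QF :=
  {(45, 40, 9), (90, -50, 7), (135, 40, 3), (270, -230, 49), (315, -230, 42), (315, -50, 2)}

theorem mem_smallForms {Q : QF} (hQ : Q ∈ QDNbeta 45 20 40) (hA : Q.1 ≤ 315)
    (hB : Q.2.1 ∈ Set.Ico (-Q.1) Q.1) : Q ∈ smallForms := by
  obtain ⟨A, B, C⟩ := Q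
  obtain ⟨hpos, ⟨a, rfl⟩, hd, ⟨k, hk⟩⟩ := hQ
  obtain ⟨hB₁, hB₂⟩ := hB
  simp only [disc] at hpos hA hd hk hB₁ hB₂
  simp only [smallForms, Finset.mem_insert, Finset.mem_singleton, Prod.mk.injEq]
  obtain rfl : B = 90 * k + 40 := by omega
  obtain ⟨ha₁, ha₂⟩ : 0 < a ∧ a ≤ 7 := by omega
  obtain ⟨hk₁, hk₂⟩ : -3 ≤ k ∧ k ≤ 3 := by omega
  interval_cases a <;> interval_cases k <;> omega

theorem req_of_mem_smallForms {Q : QF} (hQ : Q ∈ smallForms) :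
    req 45 Q (405, 40, 1) ∨ req 45 Q (90, -50, 7) := by
  simp only [smallForms, Finset.mem_insert, Finset.mem_singleton] at hQ
  rcases hQ with rfl | rfl | rfl | rfl | rfl | rfl
  · exact .inl ⟨!![-22, -1; 45, 2], mk_mem_Gamma0 (by norm_num) (by norm_num), rfl⟩
  · exact .inr ⟨!![1, 0; 0, 1], mk_mem_Gamma0 (by norm_num) (by norm_num), rfl⟩
  · exact .inr ⟨!![-7, 2; 45, -13], mk_mem_Gamma0 (by norm_num) (by norm_num), rfl⟩
  · exact .inl ⟨!![-58, -3; -135, -7], mk_mem_Gamma0 (by norm_num) (by norm_num), rfl⟩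
  · exact .inr ⟨!![-16, 5; -45, 14], mk_mem_Gamma0 (by norm_num) (by norm_num), rfl⟩
  · exact .inr ⟨!![-4, 1; -45, 11], mk_mem_Gamma0 (by norm_num) (by norm_num), rfl⟩

theorem req_of_mem_QDNbeta {Q : QF} (hQ : Q ∈ QDNbeta 45 20 40) :
    req 45 Q (405, 40, 1) ∨ req 45 Q (90, -50, 7) := by
  obtain ⟨g, hg, hle⟩ := exists_Gamma0_act_fst_le hQ
  have hQg := act_mem_QDNbeta (by norm_num) hQ hg
  obtain ⟨n, hn⟩ := exists_act_translate_snd_mem_Ico (act Q g) hQg.1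
  have hT : !![1, n; 0, 1] ∈ Gamma0 45 := mk_mem_Gamma0 (by ring) (dvd_zero _)
  have hsmall := mem_smallForms (act_mem_QDNbeta (by norm_num) hQg hT)
    (by rwa [act_translate]) (by rwa [act_translate] at hn ⊢)
  have hreq : req 45 Q (act (act Q g) !![1, n; 0, 1]) := req_trans ⟨g, hg, rfl⟩ ⟨_, hT, rfl⟩
  exact (req_of_mem_smallForms hsmall).imp (req_trans hreq) (req_trans hreq)

theorem eval_405_40_1_ne_seven (q s : ℤ) : QF.eval (405, 40, 1) q s ≠ 7 := by
  intro h
  have h5 := congrArg (Int.cast : ℤ → ZMod 5) h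
  simp only [QF.eval] at h5
  push_cast at h5
  generalize (q : ZMod 5) = q', (s : ZMod 5) = s' at h5
  revert q' s'
  decide

/-- `Q_{20,45,40}` has exactly the two `Γ₀(45)`-orbits of `[405, 40, 1]` and
`[90, −50, 7]`: both forms lie in the set, they are inequivalent, and every form
in the set is equivalent to one of them. -/
theorem Q_20_45_40_two_orbits :
    ((405, 40, 1) : QF) ∈ QDNbeta 45 20 40
    ∧ ((90, -50, 7) : QF) ∈ QDNbeta 45 20 40
    ∧ ¬ req 45 (405, 40, 1) (90, -50, 7)
    ∧ ∀ Q ∈ QDNbeta 45 20 40, req 45 Q (405, 40, 1) ∨ req 45 Q (90, -50, 7) := by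
  refine ⟨⟨by norm_num, by norm_num, by norm_num [disc], by norm_num⟩,
    ⟨by norm_num, by norm_num, by norm_num [disc], by norm_num⟩, ?_, fun Q => req_of_mem_QDNbeta⟩
  rintro ⟨g, -, hg⟩
  exact eval_405_40_1_ne_seven (g 0 1) (g 1 1) (by rw [← QF.act_snd_snd, hg])
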